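/- arXiv:2107.04334 — 2 statements merged into one kernel-verified Lean document; each statement's English description precedes it below -/
import Mathlib

section
/- Let R > 0. There exists a constant C > 0 (depending only on R, λ, m, the Lipschitz constant of a, and f) such that for all C¹ functions u, v : [0,π] → ℝ with u(0) = v(0) = u(π) = v(π) = 0, ∫₀^π u'(y)² dy ≤ R and ∫₀^π v'(y)² dy ≤ R, one has ( ∫₀^π ( λ·f(u(x))/a(∫₀^π u'(y)² dy) − λ·f(v(x))/a(∫₀^π v'(y)² dy) )² dx )^{1/2} ≤ C·( ∫₀^π (u'(x) − v'(x))² dx )^{1/2}. -/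
open Set Real Filter MeasureTheory intervalIntegral

set_option maxHeartbeats 1000000

noncomputable section

/-- First derivative on `[0, π]`. -/
def d1 (u : ℝ → ℝ) : ℝ → ℝ := derivWithin u (Set.Icc 0 Real.pi)

/-- Second derivative on `[0, π]`. -/
def d2 (u : ℝ → ℝ) : ℝ → ℝ := derivWithin (d1 u) (Set.Icc 0 Real.pi)

/-- `∫₀^π u'(y)² dy`. -/
def grad2 (u : ℝ → ℝ) : ℝ := ∫ y in (0:ℝ)..Real.pi, (d1 u y) ^ 2

/-- An equilibrium of the non-local Chafee-Infante problem with diffusion `a`,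
nonlinearity `f` and parameter `lam`. -/
def IsEquilibrium (a f : ℝ → ℝ) (lam : ℝ) (u : ℝ → ℝ) : Prop :=
  ContDiffOn ℝ 2 u (Set.Icc 0 Real.pi) ∧ u 0 = 0 ∧ u Real.pi = 0 ∧
    ∀ x ∈ Set.Icc (0:ℝ) Real.pi, a (grad2 u) * d2 u x + lam * f (u x) = 0

/-- Number of zeros of `u` in `[0, π]`. -/
def zerosCount (u : ℝ → ℝ) : ℕ :=
  Set.ncard {x : ℝ | x ∈ Set.Icc (0:ℝ) Real.pi ∧ u x = 0}

private theorem my_cs (g h : ℝ → ℝ) (hg : ContinuousOn g (Icc 0 Real.pi)) (hh : ContinuousOn h (Icc 0 Real.pi)) :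
    |∫ x in (0:ℝ)..Real.pi, g x * h x| ≤
      Real.sqrt (∫ x in (0:ℝ)..Real.pi, g x ^ 2) * Real.sqrt (∫ x in (0:ℝ)..Real.pi, h x ^ 2) := by
  have hpi := Real.pi_pos.le
  set μ := volume.restrict (Ioc (0:ℝ) Real.pi) with hμ
  have hfin : IsFiniteMeasure μ := by
    constructor
    rw [hμ, Measure.restrict_apply_univ]
    simp [Real.volume_Ioc]
  have mem2 : ∀ (g : ℝ → ℝ), ContinuousOn g (Icc 0 Real.pi) →
      MemLp (fun x => |g x|) (ENNReal.ofReal 2) μ := by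
    intro g hg
    obtain ⟨C, hC⟩ := isCompact_Icc.exists_bound_of_continuousOn hg
    refine MemLp.of_bound ?_ C ?_
    · exact ((hg.mono Ioc_subset_Icc_self).aestronglyMeasurable measurableSet_Ioc).norm
    · rw [hμ, ae_restrict_iff' measurableSet_Ioc]
      exact ae_of_all _ fun x hx => by
        simpa [abs_abs] using hC x (Ioc_subset_Icc_self hx)
  have hconj : Real.HolderConjugate 2 2 := ⟨by norm_num, by norm_num, by norm_num⟩
  have key := MeasureTheory.integral_mul_le_Lp_mul_Lq_of_nonneg hconj
    (ae_of_all μ fun x => abs_nonneg (g x)) (ae_of_all μ fun x => abs_nonneg (h x))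
    (mem2 g hg) (mem2 h hh)
  -- convert rpow to pow and sqrt
  have habs : ∀ (g : ℝ → ℝ), (∫ x, |g x| ^ (2:ℝ) ∂μ) = ∫ x in (0:ℝ)..Real.pi, g x ^ 2 := by
    intro g
    rw [intervalIntegral.integral_of_le hpi]
    apply MeasureTheory.integral_congr_ae
    exact ae_of_all _ fun x => by
      show |g x| ^ (2:ℝ) = g x ^ 2
      rw [show (2:ℝ) = ((2:ℕ):ℝ) by norm_num, Real.rpow_natCast, sq_abs]
  rw [habs g, habs h] at key
  have h1 : |∫ x in (0:ℝ)..Real.pi, g x * h x| ≤ ∫ x in (0:ℝ)..Real.pi, |g x * h x| :=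
    intervalIntegral.abs_integral_le_integral_abs hpi
  have h2 : (∫ x in (0:ℝ)..Real.pi, |g x * h x|) = ∫ x, |g x| * |h x| ∂μ := by
    rw [intervalIntegral.integral_of_le hpi]
    exact MeasureTheory.integral_congr_ae (ae_of_all _ fun x => abs_mul _ _)
  have hnn : ∀ (g : ℝ → ℝ), ContinuousOn g (Icc 0 Real.pi) → 0 ≤ ∫ x in (0:ℝ)..Real.pi, g x ^ 2 := by
    intro g hg
    apply intervalIntegral.integral_nonneg hpi
    intro x _; positivity
  calc |∫ x in (0:ℝ)..Real.pi, g x * h x| ≤ ∫ x, |g x| * |h x| ∂μ := h2 ▸ h1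
    _ ≤ (∫ x in (0:ℝ)..Real.pi, g x ^ 2) ^ (1/(2:ℝ)) * (∫ x in (0:ℝ)..Real.pi, h x ^ 2) ^ (1/(2:ℝ)) := key
    _ = _ := by rw [← Real.sqrt_eq_rpow, ← Real.sqrt_eq_rpow]

private theorem my_ftc (u : ℝ → ℝ) (hu : ContDiffOn ℝ 1 u (Icc 0 Real.pi)) (hu0 : u 0 = 0)
    {x : ℝ} (hx : x ∈ Icc (0:ℝ) Real.pi) : u x = ∫ t in (0:ℝ)..x, d1 u t := by
  have hud : UniqueDiffOn ℝ (Icc (0:ℝ) Real.pi) := uniqueDiffOn_Icc Real.pi_pos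
  have hd1c : ContinuousOn (d1 u) (Icc 0 Real.pi) := hu.continuousOn_derivWithin hud le_rfl
  have h := intervalIntegral.integral_eq_sub_of_hasDeriv_right_of_le hx.1
    (hu.continuousOn.mono (Icc_subset_Icc le_rfl hx.2))
    (fun t ht => by
      have htI : t ∈ Icc (0:ℝ) Real.pi := ⟨ht.1.le, ht.2.le.trans hx.2⟩
      have htIoo : t ∈ Ioo (0:ℝ) Real.pi := ⟨ht.1, lt_of_lt_of_le ht.2 hx.2⟩
      have := (hu.differentiableOn one_ne_zero t htI).hasDerivWithinAt
      exact this.mono_of_mem_nhdsWithin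
        (nhdsWithin_le_nhds (Icc_mem_nhds htIoo.1 htIoo.2)))
    ((hd1c.mono (Icc_subset_Icc le_rfl hx.2)).intervalIntegrable_of_Icc hx.1)
  rw [h, hu0, sub_zero]

-- L¹–L² bound
private theorem my_l1 (g : ℝ → ℝ) (hg : ContinuousOn g (Icc 0 Real.pi)) :
    ∫ x in (0:ℝ)..Real.pi, |g x| ≤
      Real.sqrt Real.pi * Real.sqrt (∫ x in (0:ℝ)..Real.pi, g x ^ 2) := by
  have h := my_cs (fun x => |g x|) (fun _ => (1:ℝ)) hg.abs continuousOn_const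
  simp only [mul_one, one_pow, sq_abs] at h
  rw [intervalIntegral.integral_const, smul_eq_mul, sub_zero, mul_one] at h
  have hnn : 0 ≤ ∫ x in (0:ℝ)..Real.pi, |g x| :=
    intervalIntegral.integral_nonneg Real.pi_pos.le fun x _ => abs_nonneg _
  rw [abs_of_nonneg hnn] at h
  linarith [h, mul_comm (Real.sqrt (∫ x in (0:ℝ)..Real.pi, g x ^ 2)) (Real.sqrt Real.pi)]

private theorem my_point (g : ℝ → ℝ) (hg : ContinuousOn g (Icc 0 Real.pi)) {x : ℝ}
    (hx : x ∈ Icc (0:ℝ) Real.pi) :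
    |∫ t in (0:ℝ)..x, g t| ≤ Real.sqrt Real.pi * Real.sqrt (∫ t in (0:ℝ)..Real.pi, g t ^ 2) := by
  have h1 : |∫ t in (0:ℝ)..x, g t| ≤ ∫ t in (0:ℝ)..x, |g t| :=
    intervalIntegral.abs_integral_le_integral_abs hx.1
  have h2 : (∫ t in (0:ℝ)..x, |g t|) ≤ ∫ t in (0:ℝ)..Real.pi, |g t| := by
    apply intervalIntegral.integral_mono_interval le_rfl hx.1 hx.2
    · exact ae_of_all _ fun t => abs_nonneg _
    · exact (hg.abs.intervalIntegrable_of_Icc Real.pi_pos.le)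
  exact h1.trans (h2.trans (my_l1 g hg))

theorem statement4 (a f : ℝ → ℝ) (lam m M R : ℝ)
    (ha_c1 : ContDiffOn ℝ 1 a (Set.Ici 0))
    (ha_mono : MonotoneOn a (Set.Ici 0))
    (ha_lip : ∃ K : NNReal, LipschitzOnWith K a (Set.Ici 0))
    (hm : 0 < m)
    (ha_bdd : ∀ s : ℝ, 0 ≤ s → m ≤ a s ∧ a s ≤ M)
    (hf_c2 : ContDiff ℝ 2 f)
    (hf_odd : Odd f)
    (hf_zero : f 0 = 0)
    (hf_deriv : deriv f 0 = 1)
    (hf_concave : ∀ s : ℝ, s ≠ 0 → s * deriv (deriv f) s < 0)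
    (hf_dissip : ∀ ε : ℝ, 0 < ε → ∃ R₀ : ℝ, ∀ s : ℝ, R₀ ≤ |s| → f s / s < ε)
    (hlam : 0 < lam)
    (hR : 0 < R) :
    ∃ C : ℝ, 0 < C ∧ ∀ u v : ℝ → ℝ,
      ContDiffOn ℝ 1 u (Set.Icc (0:ℝ) Real.pi) → ContDiffOn ℝ 1 v (Set.Icc (0:ℝ) Real.pi) →
      u 0 = 0 → u Real.pi = 0 → v 0 = 0 → v Real.pi = 0 →
      grad2 u ≤ R → grad2 v ≤ R →
      Real.sqrt (∫ x in (0:ℝ)..Real.pi,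
          (lam * f (u x) / a (grad2 u) - lam * f (v x) / a (grad2 v)) ^ 2) ≤
        C * Real.sqrt (∫ x in (0:ℝ)..Real.pi, (d1 u x - d1 v x) ^ 2) := by
  obtain ⟨K, hK⟩ := ha_lip
  have hpi := Real.pi_pos.le
  have hud : UniqueDiffOn ℝ (Icc (0:ℝ) Real.pi) := uniqueDiffOn_Icc Real.pi_pos
  set B := Real.sqrt Real.pi * Real.sqrt R with hB
  have hB0 : 0 ≤ B := mul_nonneg (Real.sqrt_nonneg _) (Real.sqrt_nonneg _)
  -- bound on deriv f on [-B, B]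
  have hdf_cont : Continuous (deriv f) := hf_c2.continuous_deriv one_le_two
  obtain ⟨L₀, hL₀⟩ := (isCompact_Icc (a := -B) (b := B)).exists_bound_of_continuousOn
    hdf_cont.continuousOn
  set L := |L₀| + 1 with hL
  have hL0 : 0 < L := by positivity
  have hLb : ∀ s ∈ Icc (-B) B, |deriv f s| ≤ L := fun s hs =>
    (hL₀ s hs).trans (by rw [hL]; exact (le_abs_self L₀).trans (by linarith))
  -- Lipschitz bound for f on [-B,B]
  have hfl : ∀ s t : ℝ, s ∈ Icc (-B) B → t ∈ Icc (-B) B → |f s - f t| ≤ L * |s - t| := by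
    intro s t hs ht
    have := Convex.norm_image_sub_le_of_norm_deriv_le
      (f := f) (s := Icc (-B) B) (C := L)
      (fun x _ => hf_c2.differentiable two_ne_zero x)
      (fun x hx => hLb x hx) (convex_Icc _ _) ht hs
    simpa [Real.norm_eq_abs] using this
  set C₀ := lam * L * Real.sqrt Real.pi / m + 2 * lam * L * B * K * Real.sqrt R / (m * m) with hC₀
  have hC₀0 : 0 ≤ C₀ := by positivity
  refine ⟨Real.sqrt Real.pi * C₀ + 1, by positivity, ?_⟩
  intro u v hu hv hu0 huπ hv0 hvπ hgu hgv
  -- continuity facts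
  have hd1u : ContinuousOn (d1 u) (Icc 0 Real.pi) := hu.continuousOn_derivWithin hud le_rfl
  have hd1v : ContinuousOn (d1 v) (Icc 0 Real.pi) := hv.continuousOn_derivWithin hud le_rfl
  have hd1uv : ContinuousOn (fun x => d1 u x - d1 v x) (Icc 0 Real.pi) := hd1u.sub hd1v
  set δsq := ∫ x in (0:ℝ)..Real.pi, (d1 u x - d1 v x) ^ 2 with hδsqdef
  have hδsq0 : 0 ≤ δsq :=
    intervalIntegral.integral_nonneg hpi fun x _ => sq_nonneg _
  set δ := Real.sqrt δsq with hδdef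
  have hδ0 : 0 ≤ δ := Real.sqrt_nonneg _
  have hgu0 : 0 ≤ grad2 u := intervalIntegral.integral_nonneg hpi fun x _ => sq_nonneg _
  have hgv0 : 0 ≤ grad2 v := intervalIntegral.integral_nonneg hpi fun x _ => sq_nonneg _
  obtain ⟨hau1, hau2⟩ := ha_bdd _ hgu0
  obtain ⟨hav1, hav2⟩ := ha_bdd _ hgv0
  have haup : 0 < a (grad2 u) := hm.trans_le hau1
  have havp : 0 < a (grad2 v) := hm.trans_le hav1
  -- pointwise bounds on u
  have hub : ∀ w : ℝ → ℝ, ContDiffOn ℝ 1 w (Icc 0 Real.pi) → w 0 = 0 → grad2 w ≤ R →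
      ∀ x ∈ Icc (0:ℝ) Real.pi, |w x| ≤ B := by
    intro w hw hw0 hgw x hx
    have hd1w : ContinuousOn (d1 w) (Icc 0 Real.pi) := hw.continuousOn_derivWithin hud le_rfl
    rw [my_ftc w hw hw0 hx]
    refine (my_point (d1 w) hd1w hx).trans ?_
    rw [hB]
    gcongr
    exact hgw
  have hubu := hub u hu hu0 hgu
  have hubv := hub v hv hv0 hgv
  -- pointwise |u x - v x| ≤ √π δ
  have huvb : ∀ x ∈ Icc (0:ℝ) Real.pi, |u x - v x| ≤ Real.sqrt Real.pi * δ := by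
    intro x hx
    rw [my_ftc u hu hu0 hx, my_ftc v hv hv0 hx,
      ← intervalIntegral.integral_sub
        ((hd1u.mono (Icc_subset_Icc le_rfl hx.2)).intervalIntegrable_of_Icc hx.1)
        ((hd1v.mono (Icc_subset_Icc le_rfl hx.2)).intervalIntegrable_of_Icc hx.1)]
    exact my_point _ hd1uv hx
  -- |grad2 u - grad2 v| ≤ 2 √R δ
  have hgdiff : |grad2 u - grad2 v| ≤ 2 * Real.sqrt R * δ := by
    have h1 : grad2 u - grad2 v
        = ∫ x in (0:ℝ)..Real.pi, (d1 u x - d1 v x) * (d1 u x + d1 v x) := by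
      rw [grad2, grad2, ← intervalIntegral.integral_sub
        ((show ContinuousOn (fun x => d1 u x ^ 2) (Icc 0 Real.pi) from hd1u.pow 2).intervalIntegrable_of_Icc hpi)
        ((show ContinuousOn (fun x => d1 v x ^ 2) (Icc 0 Real.pi) from hd1v.pow 2).intervalIntegrable_of_Icc hpi)]
      apply intervalIntegral.integral_congr
      intro x _; ring
    rw [h1]
    have h2 := my_cs _ _ hd1uv (hd1u.add hd1v)
    refine h2.trans ?_
    rw [← hδsqdef, ← hδdef, mul_comm]
    gcongr
    have hc2u : ContinuousOn (fun x => 2 * d1 u x ^ 2) (Icc 0 Real.pi) :=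
      continuousOn_const.mul (hd1u.pow 2)
    have hc2v : ContinuousOn (fun x => 2 * d1 v x ^ 2) (Icc 0 Real.pi) :=
      continuousOn_const.mul (hd1v.pow 2)
    have h3 : (∫ x in (0:ℝ)..Real.pi, (d1 u x + d1 v x) ^ 2)
        ≤ 2 * grad2 u + 2 * grad2 v := by
      have hmono : (∫ x in (0:ℝ)..Real.pi, (d1 u x + d1 v x) ^ 2)
          ≤ ∫ x in (0:ℝ)..Real.pi, (2 * d1 u x ^ 2 + 2 * d1 v x ^ 2) := by
        apply intervalIntegral.integral_mono_on hpi
          ((show ContinuousOn (fun x => (d1 u x + d1 v x) ^ 2) (Icc 0 Real.pi) from (hd1u.add hd1v).pow 2).intervalIntegrable_of_Icc hpi)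
          ((show ContinuousOn (fun x => 2 * d1 u x ^ 2 + 2 * d1 v x ^ 2) (Icc 0 Real.pi) from hc2u.add hc2v).intervalIntegrable_of_Icc hpi)
        intro x _
        nlinarith [sq_nonneg (d1 u x - d1 v x)]
      have heq : (∫ x in (0:ℝ)..Real.pi, (2 * d1 u x ^ 2 + 2 * d1 v x ^ 2))
          = 2 * grad2 u + 2 * grad2 v := by
        rw [intervalIntegral.integral_add (hc2u.intervalIntegrable_of_Icc hpi)
          (hc2v.intervalIntegrable_of_Icc hpi),
          intervalIntegral.integral_const_mul, intervalIntegral.integral_const_mul]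
        rfl
      linarith
    have h4 : (2 : ℝ) * grad2 u + 2 * grad2 v ≤ 4 * R := by linarith
    refine (Real.sqrt_le_sqrt (h3.trans h4)).trans ?_
    rw [show (4:ℝ) * R = (2 * Real.sqrt R)^2 by
      rw [mul_pow, Real.sq_sqrt hR.le]; ring]
    rw [Real.sqrt_sq (by positivity)]
  -- a-difference
  have hadiff : |a (grad2 u) - a (grad2 v)| ≤ K * (2 * Real.sqrt R * δ) := by
    have := hK.dist_le_mul (grad2 u) hgu0 (grad2 v) hgv0
    rw [Real.dist_eq, Real.dist_eq] at this
    exact this.trans (by gcongr)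
  -- pointwise bound on the integrand
  have hF : ∀ x ∈ Icc (0:ℝ) Real.pi,
      |lam * f (u x) / a (grad2 u) - lam * f (v x) / a (grad2 v)| ≤ C₀ * δ := by
    intro x hx
    have hux : u x ∈ Icc (-B) B := abs_le.mp (hubu x hx)
    have hvx : v x ∈ Icc (-B) B := abs_le.mp (hubv x hx)
    have e1 : lam * f (u x) / a (grad2 u) - lam * f (v x) / a (grad2 v)
        = lam * (f (u x) - f (v x)) / a (grad2 u)
          + lam * f (v x) * (a (grad2 v) - a (grad2 u)) / (a (grad2 u) * a (grad2 v)) := by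
      field_simp
      ring
    rw [e1]
    have t1 : |lam * (f (u x) - f (v x)) / a (grad2 u)| ≤ lam * (L * (Real.sqrt Real.pi * δ)) / m := by
      rw [abs_div, abs_of_pos haup, abs_mul, abs_of_pos hlam]
      apply div_le_div₀ (by positivity) ?_ hm hau1
      gcongr
      exact (hfl _ _ hux hvx).trans (by gcongr; exact huvb x hx)
    have hfv : |f (v x)| ≤ L * B := by
      have := hfl (v x) 0 hvx (mem_Icc.mpr ⟨by linarith, hB0⟩)
      rw [hf_zero, sub_zero, sub_zero] at this
      exact this.trans (by gcongr; exact abs_le.mpr hvx)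
    have t2 : |lam * f (v x) * (a (grad2 v) - a (grad2 u)) / (a (grad2 u) * a (grad2 v))|
        ≤ lam * (L * B) * (K * (2 * Real.sqrt R * δ)) / (m * m) := by
      rw [abs_div, abs_of_pos (mul_pos haup havp), abs_mul, abs_mul, abs_of_pos hlam]
      apply div_le_div₀ (by positivity) ?_ (by positivity)
        (mul_le_mul hau1 hav1 hm.le haup.le)
      have : |a (grad2 v) - a (grad2 u)| ≤ K * (2 * Real.sqrt R * δ) := by
        rw [abs_sub_comm]; exact hadiff
      gcongr
    refine (abs_add_le _ _).trans ((add_le_add t1 t2).trans (le_of_eq ?_))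
    rw [hC₀]
    field_simp
  -- conclude
  have hFc : ContinuousOn (fun x => lam * f (u x) / a (grad2 u) - lam * f (v x) / a (grad2 v))
      (Icc 0 Real.pi) := by
    apply ContinuousOn.sub
    · exact ((continuous_const.mul hf_c2.continuous).comp_continuousOn hu.continuousOn).div_const _
    · exact ((continuous_const.mul hf_c2.continuous).comp_continuousOn hv.continuousOn).div_const _
  have hint : (∫ x in (0:ℝ)..Real.pi,
      (lam * f (u x) / a (grad2 u) - lam * f (v x) / a (grad2 v)) ^ 2)
      ≤ Real.pi * (C₀ * δ) ^ 2 := by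
    have := intervalIntegral.integral_mono_on hpi
      ((hFc.pow 2).intervalIntegrable_of_Icc hpi)
      (_root_.intervalIntegrable_const (μ := volume) (c := (C₀ * δ)^2))
      (fun x hx => by
        have := hF x hx
        calc (lam * f (u x) / a (grad2 u) - lam * f (v x) / a (grad2 v)) ^ 2
            = |lam * f (u x) / a (grad2 u) - lam * f (v x) / a (grad2 v)| ^ 2 := (sq_abs _).symm
          _ ≤ (C₀ * δ) ^ 2 := by gcongr)
    rwa [intervalIntegral.integral_const, smul_eq_mul, sub_zero] at this
  calc Real.sqrt (∫ x in (0:ℝ)..Real.pi,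
        (lam * f (u x) / a (grad2 u) - lam * f (v x) / a (grad2 v)) ^ 2)
      ≤ Real.sqrt (Real.pi * (C₀ * δ) ^ 2) := Real.sqrt_le_sqrt hint
    _ = Real.sqrt Real.pi * (C₀ * δ) := by
        rw [Real.sqrt_mul hpi, Real.sqrt_sq (by positivity)]
    _ ≤ (Real.sqrt Real.pi * C₀ + 1) * δ := by nlinarith [hδ0]
end
end

section
/- Let λ > 0 and m > 0. There exists a constant C > 0 (depending only on λ, m and f) such that for every constant α ≥ m and every C² function u : [0,π] → ℝ with u(0) = u(π) = 0 satisfying α·u''(x) + λ·f(u(x)) = 0 for all x ∈ [0,π], one has ∫₀^π u'(x)² dx ≤ C. -/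
open Set Real Filter MeasureTheory intervalIntegral

noncomputable section

lemma my_cs_s8 {a b : ℝ} (hab : a ≤ b) (g : ℝ → ℝ)
    (hg : ContinuousOn g (Set.Icc a b)) :
    (∫ x in a..b, |g x|) ^ 2 ≤ (b - a) * ∫ x in a..b, g x ^ 2 := by
  have huI : Set.uIcc a b = Set.Icc a b := Set.uIcc_of_le hab
  have hgi : IntervalIntegrable (fun x => |g x|) volume a b := by
    apply ContinuousOn.intervalIntegrable; rw [huI]; exact hg.abs
  have hg2i : IntervalIntegrable (fun x => g x ^ 2) volume a b := by
    apply ContinuousOn.intervalIntegrable; rw [huI]; exact hg.pow 2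
  set J := ∫ x in a..b, |g x| with hJ
  set S := ∫ x in a..b, g x ^ 2 with hS
  have key : ∀ t : ℝ, 0 ≤ (b - a) * (t * t) + (-2 * J) * t + S := by
    intro t
    have h0 : 0 ≤ ∫ x in a..b, (|g x| - t) ^ 2 :=
      intervalIntegral.integral_nonneg hab (fun x _ => sq_nonneg _)
    have hexp : (∫ x in a..b, (|g x| - t) ^ 2)
        = S + (-2 * t) * J + (b - a) * t ^ 2 := by
      have heq : ∀ x, (|g x| - t) ^ 2 = g x ^ 2 + (-2 * t) * |g x| + t ^ 2 := by
        intro x; nlinarith [sq_abs (g x)]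
      rw [intervalIntegral.integral_congr (fun x _ => heq x)]
      rw [intervalIntegral.integral_add (hg2i.add (hgi.const_mul _)) intervalIntegrable_const,
        intervalIntegral.integral_add hg2i (hgi.const_mul _),
        intervalIntegral.integral_const_mul, intervalIntegral.integral_const]
      simp only [smul_eq_mul]
      try ring
    nlinarith [h0, hexp]
  have := discrim_le_zero key
  rw [discrim] at this
  nlinarith [this]

set_option maxHeartbeats 1000000 in
theorem statement8 (f : ℝ → ℝ) (lam m : ℝ)
    (hf_c2 : ContDiff ℝ 2 f)
    (hf_odd : Odd f)
    (hf_zero : f 0 = 0)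
    (hf_deriv : deriv f 0 = 1)
    (hf_concave : ∀ s : ℝ, s ≠ 0 → s * deriv (deriv f) s < 0)
    (hf_dissip : ∀ ε : ℝ, 0 < ε → ∃ R₀ : ℝ, ∀ s : ℝ, R₀ ≤ |s| → f s / s < ε)
    (hlam : 0 < lam) (hm : 0 < m) :
    ∃ C : ℝ, 0 < C ∧ ∀ α : ℝ, m ≤ α → ∀ u : ℝ → ℝ,
      ContDiffOn ℝ 2 u (Set.Icc (0:ℝ) Real.pi) → u 0 = 0 → u Real.pi = 0 →
      (∀ x ∈ Set.Icc (0:ℝ) Real.pi, α * d2 u x + lam * f (u x) = 0) →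
      grad2 u ≤ C := by
  have hπ : (0:ℝ) < Real.pi := Real.pi_pos
  set ε : ℝ := m / (2 * lam * Real.pi ^ 2) with hε_def
  have hε : 0 < ε := by positivity
  obtain ⟨R₀, hR₀⟩ := hf_dissip ε hε
  set R : ℝ := max R₀ 1 with hR_def
  have hR1 : (1:ℝ) ≤ R := le_max_right _ _
  -- bound f s * s on [-R, R]
  obtain ⟨s₀, hs₀mem, hs₀⟩ := (isCompact_Icc (a := -R) (b := R)).exists_isMaxOn
    (Set.nonempty_Icc.2 (by linarith)) ((hf_c2.continuous.mul continuous_id).continuousOn)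
  set K : ℝ := max (f s₀ * s₀) 0 with hK_def
  have hK0 : 0 ≤ K := le_max_right _ _
  have claim : ∀ s : ℝ, f s * s ≤ ε * s ^ 2 + K := by
    intro s
    by_cases hs : |s| ≤ R
    · have hmem : s ∈ Set.Icc (-R) R := by
        constructor
        · linarith [(abs_le.1 hs).1]
        · exact (abs_le.1 hs).2
      have h1 : f s * s ≤ f s₀ * s₀ := hs₀ hmem
      have h2 : 0 ≤ ε * s ^ 2 := by positivity
      have h3 : f s₀ * s₀ ≤ K := le_max_left _ _
      linarith
    · push_neg at hs
      have hsne : s ≠ 0 := by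
        intro h; rw [h, abs_zero] at hs; linarith
      have hlt : f s / s < ε := hR₀ s (le_trans (le_max_left _ _) hs.le)
      have : f s * s = (f s / s) * s ^ 2 := by field_simp
      rw [this]
      have : (f s / s) * s ^ 2 ≤ ε * s ^ 2 :=
        mul_le_mul_of_nonneg_right hlt.le (sq_nonneg _)
      linarith
  refine ⟨2 * lam * K * Real.pi / m + 1, by positivity, ?_⟩
  intro α hα u hc2 hu0 huπ hODE
  have hα0 : 0 < α := lt_of_lt_of_le hm hα
  set s := Set.Icc (0:ℝ) Real.pi with hs_def
  have hUD : UniqueDiffOn ℝ s := uniqueDiffOn_Icc hπ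
  have huI : Set.uIcc (0:ℝ) Real.pi = s := Set.uIcc_of_le hπ.le
  set g : ℝ → ℝ := d1 u with hg_def
  set h : ℝ → ℝ := d2 u with hh_def
  have hu_cont : ContinuousOn u s := hc2.continuousOn
  have hud : DifferentiableOn ℝ u s := hc2.differentiableOn two_ne_zero
  have hg_cd : ContDiffOn ℝ 1 g s := hc2.derivWithin hUD (by norm_num)
  have hg_cont : ContinuousOn g s := hg_cd.continuousOn
  have hgd : DifferentiableOn ℝ g s := hg_cd.differentiableOn one_ne_zero
  have hh_cont : ContinuousOn h s := (hg_cd.derivWithin hUD (m := 0) (by norm_num)).continuousOn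
  have hu' : ∀ x ∈ Set.Ioo (0:ℝ) Real.pi, HasDerivAt u (g x) x := by
    intro x hx
    exact ((hud x (Set.Ioo_subset_Icc_self hx)).hasDerivWithinAt).hasDerivAt
      (Icc_mem_nhds hx.1 hx.2)
  have hg' : ∀ x ∈ Set.Ioo (0:ℝ) Real.pi, HasDerivAt g (h x) x := by
    intro x hx
    exact ((hgd x (Set.Ioo_subset_Icc_self hx)).hasDerivWithinAt).hasDerivAt
      (Icc_mem_nhds hx.1 hx.2)
  -- basic integrabilities
  have hint_g2 : IntervalIntegrable (fun x => g x ^ 2) volume 0 Real.pi := by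
    apply ContinuousOn.intervalIntegrable; rw [huI]; exact hg_cont.pow 2
  have hint_hu : IntervalIntegrable (fun x => h x * u x) volume 0 Real.pi := by
    apply ContinuousOn.intervalIntegrable; rw [huI]; exact hh_cont.mul hu_cont
  have hint_fu : IntervalIntegrable (fun x => f (u x) * u x) volume 0 Real.pi := by
    apply ContinuousOn.intervalIntegrable; rw [huI]
    exact ((hf_c2.continuous.comp_continuousOn hu_cont).mul hu_cont)
  have hint_u2 : IntervalIntegrable (fun x => u x ^ 2) volume 0 Real.pi := by
    apply ContinuousOn.intervalIntegrable; rw [huI]; exact hu_cont.pow 2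
  set I : ℝ := grad2 u with hI_def
  have hI_eq : I = ∫ x in (0:ℝ)..Real.pi, g x ^ 2 := rfl
  have hI0 : 0 ≤ I := by
    rw [hI_eq]
    exact intervalIntegral.integral_nonneg hπ.le (fun x _ => sq_nonneg _)
  -- integration by parts
  have IBP : (∫ x in (0:ℝ)..Real.pi, (h x * u x + g x * g x))
      = g Real.pi * u Real.pi - g 0 * u 0 := by
    apply intervalIntegral.integral_eq_sub_of_hasDerivAt_of_le hπ.le
      (hg_cont.mul hu_cont)
    · intro x hx
      exact (hg' x hx).mul (hu' x hx)
    · apply ContinuousOn.intervalIntegrable; rw [huI]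
      exact (hh_cont.mul hu_cont).add (hg_cont.mul hg_cont)
  rw [hu0, huπ, mul_zero, mul_zero, sub_zero] at IBP
  have hgg : (∫ x in (0:ℝ)..Real.pi, g x * g x) = I := by
    rw [hI_eq]; congr 1; ext x; ring
  have hsplit : (∫ x in (0:ℝ)..Real.pi, h x * u x) = -I := by
    have := intervalIntegral.integral_add hint_hu (by
      apply ContinuousOn.intervalIntegrable; rw [huI]; exact hg_cont.mul hg_cont :
        IntervalIntegrable (fun x => g x * g x) volume 0 Real.pi)
    rw [this, hgg] at IBP
    linarith
  -- use the ODE: α * I = lam * ∫ f(u) u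
  set J : ℝ := ∫ x in (0:ℝ)..Real.pi, f (u x) * u x with hJ_def
  have hαI : α * I = lam * J := by
    have e1 : (∫ x in (0:ℝ)..Real.pi, α * (h x * u x))
        = α * ∫ x in (0:ℝ)..Real.pi, h x * u x :=
      intervalIntegral.integral_const_mul _ _
    have e2 : (∫ x in (0:ℝ)..Real.pi, α * (h x * u x))
        = ∫ x in (0:ℝ)..Real.pi, -lam * (f (u x) * u x) := by
      apply intervalIntegral.integral_congr
      intro x hx
      rw [huI] at hx
      have := hODE x hx
      have hhx : α * h x = -(lam * f (u x)) := by
        have : α * d2 u x = -(lam * f (u x)) := by linarith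
        exact this
      simp only []
      linear_combination u x * hhx
    have e3 : (∫ x in (0:ℝ)..Real.pi, -lam * (f (u x) * u x)) = -lam * J :=
      intervalIntegral.integral_const_mul _ _
    rw [e2, e3, hsplit] at e1
    nlinarith [e1]
  -- Poincaré via Cauchy-Schwarz
  set J1 : ℝ := ∫ x in (0:ℝ)..Real.pi, |g x| with hJ1_def
  have hJ1nn : 0 ≤ J1 :=
    intervalIntegral.integral_nonneg hπ.le (fun x _ => abs_nonneg _)
  have hCS : J1 ^ 2 ≤ Real.pi * I := by
    have := my_cs_s8 hπ.le g hg_cont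
    rw [sub_zero] at this
    rw [hI_eq]; exact this
  have hptw : ∀ x ∈ s, u x ^ 2 ≤ Real.pi * I := by
    intro x hx
    have hux : u x = ∫ t in (0:ℝ)..x, g t := by
      have hFTC : (∫ t in (0:ℝ)..x, g t) = u x - u 0 := by
        apply intervalIntegral.integral_eq_sub_of_hasDerivAt_of_le hx.1
          (hu_cont.mono (Set.Icc_subset_Icc le_rfl hx.2))
        · intro t ht
          exact hu' t ⟨ht.1, lt_of_lt_of_le ht.2 hx.2⟩
        · apply ContinuousOn.intervalIntegrable
          rw [Set.uIcc_of_le hx.1]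
          exact hg_cont.mono (Set.Icc_subset_Icc le_rfl hx.2)
      rw [hFTC, hu0, sub_zero]
    have habs : |u x| ≤ J1 := by
      rw [hux]
      calc |∫ t in (0:ℝ)..x, g t| ≤ ∫ t in (0:ℝ)..x, |g t| :=
            intervalIntegral.abs_integral_le_integral_abs hx.1
        _ ≤ J1 := by
            have hadj : (∫ t in (0:ℝ)..x, |g t|) + (∫ t in x..Real.pi, |g t|) = J1 := by
              apply intervalIntegral.integral_add_adjacent_intervals
              · apply ContinuousOn.intervalIntegrable
                rw [Set.uIcc_of_le hx.1]
                exact (hg_cont.mono (Set.Icc_subset_Icc le_rfl hx.2)).abs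
              · apply ContinuousOn.intervalIntegrable
                rw [Set.uIcc_of_le hx.2]
                exact (hg_cont.mono (Set.Icc_subset_Icc hx.1 le_rfl)).abs
            have h2 : 0 ≤ ∫ t in x..Real.pi, |g t| :=
              intervalIntegral.integral_nonneg hx.2 (fun t _ => abs_nonneg _)
            linarith
    calc u x ^ 2 = |u x| ^ 2 := (sq_abs _).symm
      _ ≤ J1 ^ 2 := by nlinarith [abs_nonneg (u x)]
      _ ≤ Real.pi * I := hCS
  have hPoin : (∫ x in (0:ℝ)..Real.pi, u x ^ 2) ≤ Real.pi ^ 2 * I := by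
    calc (∫ x in (0:ℝ)..Real.pi, u x ^ 2)
        ≤ ∫ _x in (0:ℝ)..Real.pi, Real.pi * I := by
          apply intervalIntegral.integral_mono_on hπ.le hint_u2 intervalIntegrable_const
          intro x hx
          exact hptw x hx
      _ = Real.pi ^ 2 * I := by
          rw [intervalIntegral.integral_const]; simp; ring
  -- bound J
  have hJbound : J ≤ ε * (Real.pi ^ 2 * I) + K * Real.pi := by
    have h1 : J ≤ ∫ x in (0:ℝ)..Real.pi, (ε * u x ^ 2 + K) := by
      apply intervalIntegral.integral_mono_on hπ.le hint_fu
        ((hint_u2.const_mul _).add intervalIntegrable_const)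
      intro x _
      exact claim (u x)
    have h2 : (∫ x in (0:ℝ)..Real.pi, (ε * u x ^ 2 + K))
        = ε * (∫ x in (0:ℝ)..Real.pi, u x ^ 2) + K * Real.pi := by
      rw [intervalIntegral.integral_add (hint_u2.const_mul _) intervalIntegrable_const,
        intervalIntegral.integral_const_mul, intervalIntegral.integral_const]
      simp only [smul_eq_mul, sub_zero]
      ring
    have h3 : ε * (∫ x in (0:ℝ)..Real.pi, u x ^ 2) ≤ ε * (Real.pi ^ 2 * I) :=
      mul_le_mul_of_nonneg_left hPoin hε.le
    linarith
  -- final arithmetic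
  have hεπ : lam * (ε * Real.pi ^ 2) = m / 2 := by
    rw [hε_def]
    field_simp
  have hmI : m * I ≤ α * I := mul_le_mul_of_nonneg_right hα hI0
  have hfin : m * I ≤ m / 2 * I + lam * K * Real.pi := by
    have : α * I ≤ lam * (ε * (Real.pi ^ 2 * I) + K * Real.pi) := by
      rw [hαI]
      exact mul_le_mul_of_nonneg_left hJbound hlam.le
    nlinarith [hmI, this, hεπ]
  show I ≤ 2 * lam * K * Real.pi / m + 1
  have : I ≤ 2 * lam * K * Real.pi / m := by
    rw [le_div_iff₀ hm]
    nlinarith [hfin]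
  linarith
end
end
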